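/- arXiv:2110.07929 — 2 statements merged into one kernel-verified Lean document; each statement's English description precedes it below -/
import Mathlib

section
/- For every A ∈ SL(2,ℝ) and integers n, k ≥ 1, there exists a unique h > 0 such that f_h(A) = 1/k. -/
noncomputable section

/-- The linear action of a 2×2 real matrix on the Euclidean plane. -/
def act (A : Matrix (Fin 2) (Fin 2) ℝ) (v : EuclideanSpace ℝ (Fin 2)) :
    EuclideanSpace ℝ (Fin 2) :=
  (WithLp.equiv 2 (Fin 2 → ℝ)).symm (A.mulVec (WithLp.equiv 2 (Fin 2 → ℝ) v))

/-- The scaled standard lattice `Λ = (1/√(n(k+1))) ℤ² \ {0}`. -/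
def Lam (n k : ℕ) : Set (EuclideanSpace ℝ (Fin 2)) :=
  {v | ∃ a b : ℤ, ¬(a = 0 ∧ b = 0) ∧
    v 0 = (a : ℝ) / Real.sqrt (n * (k + 1)) ∧ v 1 = (b : ℝ) / Real.sqrt (n * (k + 1))}

/-- `f_t(A) = ∑_{v ∈ A(Λ)} exp (-t ‖v‖)`. -/
def fEnt (n k : ℕ) (t : ℝ) (A : Matrix (Fin 2) (Fin 2) ℝ) : ℝ :=
  ∑' v : (act A '' Lam n k), Real.exp (-t * ‖(v : EuclideanSpace ℝ (Fin 2))‖)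

namespace EntropyAux

/-- coordinate bound in the Euclidean plane -/
lemma abs_coord_le_norm (y : EuclideanSpace ℝ (Fin 2)) (i : Fin 2) : |y i| ≤ ‖y‖ := by
  rw [EuclideanSpace.norm_eq, ← Real.sqrt_sq_eq_abs]
  apply Real.sqrt_le_sqrt
  simp only [Real.norm_eq_abs, sq_abs]
  exact Finset.single_le_sum (f := fun j => y j ^ 2) (fun j _ => sq_nonneg _) (Finset.mem_univ i)

/-- geometric series over the integers -/
lemma summable_exp_abs_int {c : ℝ} (hc : 0 < c) :
    Summable fun m : ℤ => Real.exp (-c * |(m : ℝ)|) := by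
  have key : Summable fun m : ℕ => Real.exp (-c * m) := by
    have h : ∀ m : ℕ, Real.exp (-c * m) = Real.exp (-c) ^ m := by
      intro m; rw [← Real.exp_nat_mul]; ring_nf
    simp only [h]
    exact summable_geometric_of_lt_one (Real.exp_nonneg _) (Real.exp_lt_one_iff.2 (by linarith))
  apply Summable.of_nat_of_neg
  · simpa using key
  · simpa using key

def sN (n k : ℕ) : ℝ := Real.sqrt (n * (k + 1))

def vec (n k : ℕ) (p : ℤ × ℤ) : EuclideanSpace ℝ (Fin 2) :=
  (WithLp.equiv 2 (Fin 2 → ℝ)).symm ![(p.1 : ℝ) / sN n k, (p.2 : ℝ) / sN n k]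

def w (n k : ℕ) (A : Matrix (Fin 2) (Fin 2) ℝ) (p : ℤ × ℤ) : EuclideanSpace ℝ (Fin 2) :=
  act A (vec n k p)

lemma vec_apply (n k : ℕ) (p : ℤ × ℤ) :
    vec n k p 0 = (p.1 : ℝ) / sN n k ∧ vec n k p 1 = (p.2 : ℝ) / sN n k := by
  constructor <;> simp [vec, WithLp.equiv_symm_apply, PiLp.toLp_apply]

lemma sN_pos {n k : ℕ} (hn : 1 ≤ n) : 0 < sN n k := by
  apply Real.sqrt_pos.2
  have h1 : (1 : ℝ) ≤ (n : ℝ) := by exact_mod_cast hn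
  have h2 : (0 : ℝ) < (k : ℝ) + 1 := by positivity
  nlinarith

lemma w_coord (n k : ℕ) (A : Matrix (Fin 2) (Fin 2) ℝ) (p : ℤ × ℤ) (i : Fin 2) :
    w n k A p i = A i 0 * ((p.1 : ℝ) / sN n k) + A i 1 * ((p.2 : ℝ) / sN n k) := by
  simp [w, act, vec, WithLp.equiv_symm_apply, PiLp.toLp_apply,
    Matrix.mulVec, dotProduct, Fin.sum_univ_two]
  fin_cases i <;> simp

section Fixed

variable {n k : ℕ} {A : Matrix (Fin 2) (Fin 2) ℝ}

lemma recover (hA : A.det = 1) (p : ℤ × ℤ) :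
    (p.1 : ℝ) / sN n k = A 1 1 * w n k A p 0 - A 0 1 * w n k A p 1 ∧
    (p.2 : ℝ) / sN n k = A 0 0 * w n k A p 1 - A 1 0 * w n k A p 0 := by
  have h0 := w_coord n k A p 0
  have h1 := w_coord n k A p 1
  rw [Matrix.det_fin_two] at hA
  constructor
  · rw [h0, h1]; linear_combination (-((p.1 : ℝ) / sN n k)) * hA
  · rw [h0, h1]; linear_combination (-((p.2 : ℝ) / sN n k)) * hA

/-- the constant `K` -/
def K (A : Matrix (Fin 2) (Fin 2) ℝ) : ℝ :=
  |A 0 0| + |A 0 1| + |A 1 0| + |A 1 1| + 1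

lemma K_pos : 0 < K A := by
  have := abs_nonneg (A 0 0); have := abs_nonneg (A 0 1)
  have := abs_nonneg (A 1 0); have := abs_nonneg (A 1 1)
  unfold K; linarith

lemma abs_sum_le (hn : 1 ≤ n) (hA : A.det = 1) (p : ℤ × ℤ) :
    (|(p.1 : ℝ)| + |(p.2 : ℝ)|) ≤ 2 * sN n k * K A * ‖w n k A p‖ := by
  obtain ⟨h1, h2⟩ := recover (n := n) (k := k) hA p
  have hs := sN_pos (k := k) hn
  have hw0 := abs_coord_le_norm (w n k A p) 0
  have hw1 := abs_coord_le_norm (w n k A p) 1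
  have hb0 : |w n k A p 0| ≤ ‖w n k A p‖ := hw0
  have hb1 : |w n k A p 1| ≤ ‖w n k A p‖ := hw1
  have e1 : |(p.1 : ℝ)| / sN n k ≤ K A * ‖w n k A p‖ := by
    calc |(p.1 : ℝ)| / sN n k = |(p.1 : ℝ) / sN n k| := by
          rw [abs_div, abs_of_pos hs]
      _ = |A 1 1 * w n k A p 0 - A 0 1 * w n k A p 1| := by rw [h1]
      _ ≤ |A 1 1| * |w n k A p 0| + |A 0 1| * |w n k A p 1| := by
          calc _ ≤ |A 1 1 * w n k A p 0| + |A 0 1 * w n k A p 1| := abs_sub _ _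
            _ = _ := by rw [abs_mul, abs_mul]
      _ ≤ K A * ‖w n k A p‖ := by
          have hK : |A 1 1| + |A 0 1| ≤ K A := by
            have := abs_nonneg (A 0 0); have := abs_nonneg (A 1 0)
            unfold K; linarith
          have hwn : 0 ≤ ‖w n k A p‖ := norm_nonneg _
          nlinarith [abs_nonneg (A 1 1), abs_nonneg (A 0 1), abs_nonneg (w n k A p 0),
            abs_nonneg (w n k A p 1)]
  have e2 : |(p.2 : ℝ)| / sN n k ≤ K A * ‖w n k A p‖ := by
    calc |(p.2 : ℝ)| / sN n k = |(p.2 : ℝ) / sN n k| := by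
          rw [abs_div, abs_of_pos hs]
      _ = |A 0 0 * w n k A p 1 - A 1 0 * w n k A p 0| := by rw [h2]
      _ ≤ |A 0 0| * |w n k A p 1| + |A 1 0| * |w n k A p 0| := by
          calc _ ≤ |A 0 0 * w n k A p 1| + |A 1 0 * w n k A p 0| := abs_sub _ _
            _ = _ := by rw [abs_mul, abs_mul]
      _ ≤ K A * ‖w n k A p‖ := by
          have hK : |A 0 0| + |A 1 0| ≤ K A := by
            have := abs_nonneg (A 0 1); have := abs_nonneg (A 1 1)
            unfold K; linarith
          have hwn : 0 ≤ ‖w n k A p‖ := norm_nonneg _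
          nlinarith [abs_nonneg (A 0 0), abs_nonneg (A 1 0), abs_nonneg (w n k A p 0),
            abs_nonneg (w n k A p 1)]
  have e1' : |(p.1 : ℝ)| ≤ sN n k * (K A * ‖w n k A p‖) := by
    rw [div_le_iff₀ hs] at e1; linarith [e1]
  have e2' : |(p.2 : ℝ)| ≤ sN n k * (K A * ‖w n k A p‖) := by
    rw [div_le_iff₀ hs] at e2; linarith [e2]
  nlinarith [e1', e2']


/-- lower bound constant for norms of lattice images -/
def bet (n k : ℕ) (A : Matrix (Fin 2) (Fin 2) ℝ) : ℝ := 1 / (2 * sN n k * K A)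

lemma bet_pos (hn : 1 ≤ n) : 0 < bet n k A := by
  have := sN_pos (n := n) (k := k) hn
  have := K_pos (A := A)
  unfold bet; positivity

lemma bet_mul_le (hn : 1 ≤ n) (hA : A.det = 1) (p : ℤ × ℤ) :
    bet n k A * (|(p.1 : ℝ)| + |(p.2 : ℝ)|) ≤ ‖w n k A p‖ := by
  have h := abs_sum_le (n := n) (k := k) hn hA p
  have hs := sN_pos (n := n) (k := k) hn
  have hK := K_pos (A := A)
  have hpos : 0 < 2 * sN n k * K A := by positivity
  rw [bet, div_mul_eq_mul_div, div_le_iff₀ hpos, one_mul]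
  linarith [h]

lemma norm_w_ge (hn : 1 ≤ n) (hA : A.det = 1) {p : ℤ × ℤ} (hp : ¬(p.1 = 0 ∧ p.2 = 0)) :
    bet n k A ≤ ‖w n k A p‖ := by
  have h := bet_mul_le (n := n) (k := k) hn hA p
  have hb := bet_pos (n := n) (k := k) (A := A) hn
  have h1 : (1 : ℝ) ≤ |(p.1 : ℝ)| + |(p.2 : ℝ)| := by
    rcases Decidable.em (p.1 = 0) with h0 | h0
    · have h2 : p.2 ≠ 0 := by tauto
      have : (1 : ℝ) ≤ |(p.2 : ℝ)| := by
        rw [← Int.cast_abs]; exact_mod_cast Int.one_le_abs h2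
      have := abs_nonneg ((p.1 : ℝ)); linarith
    · have : (1 : ℝ) ≤ |(p.1 : ℝ)| := by
        rw [← Int.cast_abs]; exact_mod_cast Int.one_le_abs h0
      have := abs_nonneg ((p.2 : ℝ)); linarith
  nlinarith

lemma norm_w_pos (hn : 1 ≤ n) (hA : A.det = 1) {p : ℤ × ℤ} (hp : ¬(p.1 = 0 ∧ p.2 = 0)) :
    0 < ‖w n k A p‖ :=
  lt_of_lt_of_le (bet_pos hn) (norm_w_ge hn hA hp)

/-- the index set -/
abbrev Idx : Type := {p : ℤ × ℤ // ¬(p.1 = 0 ∧ p.2 = 0)}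

/-- summability of the lattice sum -/
lemma summable_main (hn : 1 ≤ n) (hA : A.det = 1) {t : ℝ} (ht : 0 < t) :
    Summable fun p : Idx => Real.exp (-t * ‖w n k A p.1‖) := by
  have hb := bet_pos (n := n) (k := k) (A := A) hn
  have hc : 0 < t * bet n k A := mul_pos ht hb
  have h1 := summable_exp_abs_int hc
  have full : Summable fun p : ℤ × ℤ => Real.exp (-t * ‖w n k A p‖) := by
    have hg : Summable fun p : ℤ × ℤ =>
        Real.exp (-(t * bet n k A) * |(p.1 : ℝ)|) * Real.exp (-(t * bet n k A) * |(p.2 : ℝ)|) :=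
      h1.mul_of_nonneg h1 (fun a => Real.exp_nonneg _) (fun a => Real.exp_nonneg _)
    apply Summable.of_nonneg_of_le (fun p => Real.exp_nonneg _) _ hg
    intro p
    rw [← Real.exp_add]
    apply Real.exp_le_exp.2
    have := bet_mul_le (n := n) (k := k) hn hA p
    nlinarith [abs_nonneg ((p.1 : ℝ)), abs_nonneg ((p.2 : ℝ))]
  exact full.comp_injective Subtype.val_injective


lemma w_injective (hn : 1 ≤ n) (hA : A.det = 1) {p q : ℤ × ℤ}
    (h : w n k A p = w n k A q) : p = q := by
  have hs := sN_pos (n := n) (k := k) hn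
  have h0 : w n k A p 0 = w n k A q 0 := by rw [h]
  have h1 : w n k A p 1 = w n k A q 1 := by rw [h]
  obtain ⟨hp1, hp2⟩ := recover (n := n) (k := k) hA p
  obtain ⟨hq1, hq2⟩ := recover (n := n) (k := k) hA q
  have e1 : (p.1 : ℝ) / sN n k = (q.1 : ℝ) / sN n k := by rw [hp1, hq1, h0, h1]
  have e2 : (p.2 : ℝ) / sN n k = (q.2 : ℝ) / sN n k := by rw [hp2, hq2, h0, h1]
  have c1 : p.1 = q.1 := by field_simp at e1; exact_mod_cast e1
  have c2 : p.2 = q.2 := by field_simp at e2; exact_mod_cast e2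
  ext <;> assumption

lemma w_mem (p : Idx) : w n k A p.1 ∈ act A '' Lam n k := by
  refine ⟨vec n k p.1, ⟨p.1.1, p.1.2, p.2, ?_, ?_⟩, rfl⟩
  · exact (vec_apply n k p.1).1
  · exact (vec_apply n k p.1).2

/-- the main sum, reindexed by `Idx` -/
def F (n k : ℕ) (A : Matrix (Fin 2) (Fin 2) ℝ) (t : ℝ) : ℝ :=
  ∑' p : Idx, Real.exp (-t * ‖w n k A p.1‖)

lemma fEnt_eq (hn : 1 ≤ n) (hA : A.det = 1) (t : ℝ) :
    fEnt n k t A = F n k A t := by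
  have hbij : Function.Bijective (fun p : Idx =>
      (⟨w n k A p.1, w_mem p⟩ : (act A '' Lam n k : Set (EuclideanSpace ℝ (Fin 2))))) := by
    constructor
    · intro p q hpq
      have : w n k A p.1 = w n k A q.1 := congrArg Subtype.val hpq
      exact Subtype.ext (w_injective hn hA this)
    · rintro ⟨y, u, ⟨a, b, hab, h0, h1⟩, rfl⟩
      refine ⟨⟨(a, b), hab⟩, ?_⟩
      have hu : u = vec n k (a, b) := by
        apply PiLp.ext
        intro i
        fin_cases i
        · show u 0 = vec n k (a, b) 0
          rw [h0]; exact ((vec_apply n k (a, b)).1).symm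
        · show u 1 = vec n k (a, b) 1
          rw [h1]; exact ((vec_apply n k (a, b)).2).symm
      simp only [w, hu]
  let e := Equiv.ofBijective _ hbij
  rw [fEnt, F, ← Equiv.tsum_eq e (fun v => Real.exp (-t * ‖(v : EuclideanSpace ℝ (Fin 2))‖))]
  rfl

lemma F_strictAnti (hn : 1 ≤ n) (hA : A.det = 1) {s t : ℝ} (hs : 0 < s) (hst : s < t) :
    F n k A t < F n k A s := by
  have ht : 0 < t := hs.trans hst
  refine Summable.tsum_lt_tsum (f := fun p : Idx => Real.exp (-t * ‖w n k A p.1‖))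
    (i := ⟨(1, 0), by simp⟩) (fun p => ?_) ?_ (summable_main hn hA ht) (summable_main hn hA hs)
  · apply Real.exp_le_exp.2
    have := norm_nonneg (w n k A p.1)
    nlinarith
  · apply Real.exp_lt_exp.2
    have hpos : 0 < ‖w n k A ((1 : ℤ), (0 : ℤ))‖ := norm_w_pos hn hA (by simp)
    nlinarith

lemma F_contOn (hn : 1 ≤ n) (hA : A.det = 1) {a : ℝ} (ha : 0 < a) :
    ContinuousOn (F n k A) (Set.Ici a) := by
  rw [continuousOn_iff_continuous_restrict]
  have : (Set.Ici a).domRestrict (F n k A) =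
      fun t : Set.Ici a => ∑' p : Idx, Real.exp (-(t : ℝ) * ‖w n k A p.1‖) := rfl
  rw [this]
  apply continuous_tsum (u := fun p : Idx => Real.exp (-a * ‖w n k A p.1‖))
  · intro p
    exact Real.continuous_exp.comp ((continuous_subtype_val.neg).mul continuous_const)
  · exact summable_main hn hA ha
  · intro p t
    rw [Real.norm_eq_abs, abs_of_pos (Real.exp_pos _)]
    apply Real.exp_le_exp.2
    have h1 : a ≤ (t : ℝ) := t.2
    have h2 : 0 ≤ ‖w n k A p.1‖ := norm_nonneg _
    nlinarith


lemma F_lower (hn : 1 ≤ n) (hA : A.det = 1) :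
    ∃ a0 : ℝ, 0 < a0 ∧ (3 : ℝ) / 2 ≤ F n k A a0 := by
  have q1 : Idx := ⟨(1, 0), by simp⟩
  set M : ℝ := max (max ‖w n k A ((1 : ℤ), (0 : ℤ))‖ ‖w n k A ((2 : ℤ), (0 : ℤ))‖)
      ‖w n k A ((3 : ℤ), (0 : ℤ))‖ with hMdef
  have hM : 0 < M := by
    have h1 : 0 < ‖w n k A ((1 : ℤ), (0 : ℤ))‖ := norm_w_pos hn hA (by simp)
    calc 0 < ‖w n k A ((1 : ℤ), (0 : ℤ))‖ := h1
      _ ≤ M := le_trans (le_max_left _ _) (le_max_left _ _)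
  have hlog : 0 < Real.log 2 := Real.log_pos one_lt_two
  set a0 : ℝ := Real.log 2 / M with ha0def
  have ha0 : 0 < a0 := div_pos hlog hM
  refine ⟨a0, ha0, ?_⟩
  have key : ∀ p : ℤ × ℤ, ‖w n k A p‖ ≤ M → (1 : ℝ) / 2 ≤ Real.exp (-a0 * ‖w n k A p‖) := by
    intro p hp
    have h1 : a0 * ‖w n k A p‖ ≤ Real.log 2 := by
      have : a0 * M = Real.log 2 := div_mul_cancel₀ _ hM.ne'
      nlinarith [norm_nonneg (w n k A p)]
    have h2 : Real.exp (-Real.log 2) ≤ Real.exp (-a0 * ‖w n k A p‖) := by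
      apply Real.exp_le_exp.2; linarith
    have h3 : Real.exp (-Real.log 2) = 1 / 2 := by
      rw [Real.exp_neg, Real.exp_log (by norm_num : (0:ℝ) < 2)]; norm_num
    linarith [h2, h3.symm.le]
  classical
  set f : Idx → ℝ := fun p => Real.exp (-a0 * ‖w n k A p.1‖) with hfdef
  set p1 : Idx := ⟨(1, 0), by simp⟩
  set p2 : Idx := ⟨(2, 0), by simp⟩
  set p3 : Idx := ⟨(3, 0), by simp⟩
  have h12 : p1 ≠ p2 := by simp [p1, p2, Subtype.ext_iff, Prod.ext_iff]
  have h13 : p1 ≠ p3 := by simp [p1, p3, Subtype.ext_iff, Prod.ext_iff]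
  have h23 : p2 ≠ p3 := by simp [p2, p3, Subtype.ext_iff, Prod.ext_iff]
  have hsum : ∑ p ∈ ({p1, p2, p3} : Finset Idx), f p ≤ F n k A a0 := by
    apply Summable.sum_le_tsum _ (fun _ _ => Real.exp_nonneg _) (summable_main hn hA ha0)
  have hexp : ∑ p ∈ ({p1, p2, p3} : Finset Idx), f p = f p1 + f p2 + f p3 := by
    rw [Finset.sum_insert (by simp [h12, h13]), Finset.sum_insert (by simp [h23]),
      Finset.sum_singleton]
    ring
  have b1 : (1 : ℝ) / 2 ≤ f p1 := key _ (le_trans (le_max_left _ _) (le_max_left _ _))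
  have b2 : (1 : ℝ) / 2 ≤ f p2 := key _ (le_trans (le_max_right _ _) (le_max_left _ _))
  have b3 : (1 : ℝ) / 2 ≤ f p3 := key _ (le_max_right _ _)
  linarith [hsum, hexp.symm.le]

lemma F_upper (hn : 1 ≤ n) (hA : A.det = 1) {t : ℝ} (ht : 1 ≤ t) :
    F n k A t ≤ Real.exp (-(t - 1) * bet n k A) * F n k A 1 := by
  have hb := bet_pos (n := n) (k := k) (A := A) hn
  have S1 := summable_main (n := n) (k := k) hn hA one_pos
  have St := summable_main (n := n) (k := k) hn hA (lt_of_lt_of_le one_pos ht)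
  have hterm : ∀ p : Idx, Real.exp (-t * ‖w n k A p.1‖) ≤
      Real.exp (-(t - 1) * bet n k A) * Real.exp (-1 * ‖w n k A p.1‖) := by
    intro p
    rw [← Real.exp_add]
    apply Real.exp_le_exp.2
    have hc : bet n k A ≤ ‖w n k A p.1‖ := norm_w_ge hn hA p.2
    nlinarith
  calc F n k A t ≤ ∑' p : Idx, Real.exp (-(t - 1) * bet n k A) * Real.exp (-1 * ‖w n k A p.1‖) :=
        Summable.tsum_le_tsum hterm St (S1.mul_left _)
    _ = Real.exp (-(t - 1) * bet n k A) * F n k A 1 := tsum_mul_left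

end Fixed

end EntropyAux

open EntropyAux Filter

/-- For every `A ∈ SL(2,ℝ)` and integers `n, k ≥ 1`, there is a unique `h > 0`
with `f_h(A) = 1/k`. -/
theorem exists_unique_entropy
    (n k : ℕ) (hn : 1 ≤ n) (hk : 1 ≤ k)
    (A : Matrix (Fin 2) (Fin 2) ℝ) (hA : A.det = 1) :
    ∃! h : ℝ, 0 < h ∧ fEnt n k h A = 1 / (k : ℝ) := by
  obtain ⟨a0, ha0, hFa0⟩ := F_lower (n := n) (k := k) hn hA
  have hb := bet_pos (n := n) (k := k) (A := A) hn
  have hkR : (1 : ℝ) ≤ (k : ℝ) := by exact_mod_cast hk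
  have hk' : (0 : ℝ) < 1 / (k : ℝ) := by positivity
  have hk1 : 1 / (k : ℝ) ≤ 1 := by
    rw [div_le_one (by linarith)]; exact hkR
  -- choose a large point where F is small
  have htend : Tendsto (fun t : ℝ => Real.exp (-(t - 1) * bet n k A) * F n k A 1)
      atTop (nhds 0) := by
    have h1 : Tendsto (fun t : ℝ => -(t - 1) * bet n k A) atTop atBot := by
      have h2 : Tendsto (fun t : ℝ => (t - 1) * bet n k A) atTop atTop :=
        (tendsto_atTop_add_const_right atTop (-1) tendsto_id).atTop_mul_const hb
      have h3 := (tendsto_neg_atTop_atBot).comp h2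
      convert h3 using 2 with t
      simp only [Function.comp]
      ring
    have := (Real.tendsto_exp_atBot.comp h1).mul_const (F n k A 1)
    simpa using this
  have hev := (htend.eventually_lt_const hk').and (eventually_ge_atTop (max a0 1))
  obtain ⟨b, hb1, hb2⟩ := hev.exists
  have hab : a0 ≤ b := le_trans (le_max_left _ _) hb2
  have h1b : 1 ≤ b := le_trans (le_max_right _ _) hb2
  have hFb : F n k A b < 1 / (k : ℝ) := lt_of_le_of_lt (F_upper hn hA h1b) hb1
  have hFa : 1 / (k : ℝ) < F n k A a0 := by linarith
  have hsub : Set.Icc (F n k A b) (F n k A a0) ⊆ F n k A '' Set.Icc a0 b :=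
    intermediate_value_Icc' hab ((F_contOn hn hA ha0).mono (fun x hx => hx.1))
  obtain ⟨h, hmem, hFh⟩ := hsub ⟨le_of_lt hFb, le_of_lt hFa⟩
  have hpos : 0 < h := lt_of_lt_of_le ha0 hmem.1
  refine ⟨h, ⟨hpos, by rw [fEnt_eq hn hA]; exact hFh⟩, ?_⟩
  rintro y ⟨hy, hy2⟩
  rw [fEnt_eq hn hA] at hy2
  by_contra hne
  rcases lt_or_gt_of_ne hne with hlt | hgt
  · have := F_strictAnti (n := n) (k := k) hn hA hy hlt
    rw [hFh, hy2] at this; exact lt_irrefl _ this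
  · have := F_strictAnti (n := n) (k := k) hn hA hpos hgt
    rw [hFh, hy2] at this; exact lt_irrefl _ this
end
end

section
/- Let ψ₁ : (0,∞) → ℝ be a smooth completely monotone function, and let ψ₂ : (0,∞) → (0,∞) be a smooth function whose derivative ψ₂′ is completely monotone. Then the composition ψ₁ ∘ ψ₂ is completely monotone on (0,∞). -/
/-- A function `ℝ → ℝ` is completely monotone on `(0,∞)` if
`(-1)^n ψ⁽ⁿ⁾(x) ≥ 0` for all `n ≥ 0` and `x > 0`. -/
def CompletelyMonotoneOn (ψ : ℝ → ℝ) : Prop :=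
  ∀ (n : ℕ) (x : ℝ), 0 < x → 0 ≤ (-1 : ℝ) ^ n * iteratedDeriv n ψ x

open Set Filter Topology

lemma itdW_eq {s : Set ℝ} (hs : IsOpen s) {x : ℝ} (hx : x ∈ s) (n : ℕ) (f : ℝ → ℝ) :
    iteratedDerivWithin n f s x = iteratedDeriv n f x := by
  rw [iteratedDerivWithin_eq_iteratedFDerivWithin, iteratedDeriv_eq_iteratedFDeriv,
    iteratedFDerivWithin_of_isOpen n hs hx]

lemma itd_add {s : Set ℝ} (hs : IsOpen s) {x : ℝ} (hx : x ∈ s) (n : ℕ) {f g : ℝ → ℝ}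
    (hf : ContDiffOn ℝ (⊤ : ℕ∞) f s) (hg : ContDiffOn ℝ (⊤ : ℕ∞) g s) :
    iteratedDeriv n (fun y => f y + g y) x = iteratedDeriv n f x + iteratedDeriv n g x := by
  rw [← itdW_eq hs hx, ← itdW_eq hs hx n f, ← itdW_eq hs hx n g]
  exact iteratedDerivWithin_add hx hs.uniqueDiffOn ((hf.contDiffWithinAt hx).of_le (by exact_mod_cast le_top)) ((hg.contDiffWithinAt hx).of_le (by exact_mod_cast le_top))

lemma itd_leibniz {s : Set ℝ} (hs : IsOpen s) (n : ℕ) : ∀ (f g : ℝ → ℝ),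
    ContDiffOn ℝ (⊤ : ℕ∞) f s → ContDiffOn ℝ (⊤ : ℕ∞) g s → ∀ x ∈ s,
    iteratedDeriv n (fun y => f y * g y) x =
      ∑ k ∈ Finset.range (n + 1),
        (n.choose k : ℝ) * (iteratedDeriv k f x * iteratedDeriv (n - k) g x) := by
  induction n with
  | zero => intro f g hf hg x hx; simp
  | succ n IH =>
    intro f g hf hg x hx
    have hf' : ContDiffOn ℝ (⊤ : ℕ∞) (deriv f) s := hf.deriv_of_isOpen hs (by simp)
    have hg' : ContDiffOn ℝ (⊤ : ℕ∞) (deriv g) s := hg.deriv_of_isOpen hs (by simp)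
    have heq : ∀ y ∈ s, deriv (fun y => f y * g y) y
        = deriv f y * g y + f y * deriv g y := by
      intro y hy
      exact deriv_fun_mul ((hf.contDiffAt (hs.mem_nhds hy)).differentiableAt (by simp))
        ((hg.contDiffAt (hs.mem_nhds hy)).differentiableAt (by simp))
    calc iteratedDeriv (n + 1) (fun y => f y * g y) x
        = iteratedDeriv n (deriv (fun y => f y * g y)) x := by rw [iteratedDeriv_succ']
      _ = iteratedDeriv n (fun y => deriv f y * g y + f y * deriv g y) x := by
          apply Filter.EventuallyEq.iteratedDeriv_eq
          filter_upwards [hs.mem_nhds hx] with y hy using heq y hy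
      _ = iteratedDeriv n (fun y => deriv f y * g y) x
            + iteratedDeriv n (fun y => f y * deriv g y) x :=
          itd_add hs hx n (hf'.mul hg) (hf.mul hg')
      _ = ∑ k ∈ Finset.range (n + 1),
            (n.choose k : ℝ) * (iteratedDeriv k (deriv f) x * iteratedDeriv (n - k) g x)
          + ∑ k ∈ Finset.range (n + 1),
            (n.choose k : ℝ) * (iteratedDeriv k f x * iteratedDeriv (n - k) (deriv g) x) := by
          rw [IH (deriv f) g hf' hg x hx, IH f (deriv g) hf hg' x hx]
      _ = ∑ k ∈ Finset.range (n + 2),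
            ((n + 1).choose k : ℝ) * (iteratedDeriv k f x * iteratedDeriv (n + 1 - k) g x) := by
          rw [Finset.sum_choose_succ_mul
            (fun a b => iteratedDeriv a f x * iteratedDeriv b g x) n]
          rw [add_comm]
          congr 1
          · refine Finset.sum_congr rfl fun k hk => ?_
            rw [Finset.mem_range] at hk
            have h1 : n - k + 1 = n + 1 - k := by omega
            rw [← h1, ← iteratedDeriv_succ']
          · refine Finset.sum_congr rfl fun k hk => ?_
            rw [← iteratedDeriv_succ']

/-- Miller–Samko: if `ψ₁` is smooth and completely monotone on `(0,∞)`, and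
`ψ₂ : (0,∞) → (0,∞)` is smooth with completely monotone derivative, then the
composition `ψ₁ ∘ ψ₂` is completely monotone on `(0,∞)`. -/
theorem completelyMonotone_comp
    (ψ₁ ψ₂ : ℝ → ℝ)
    (hψ₁smooth : ContDiffOn ℝ (⊤ : ℕ∞) ψ₁ (Set.Ioi 0))
    (hψ₁ : CompletelyMonotoneOn ψ₁)
    (hψ₂smooth : ContDiffOn ℝ (⊤ : ℕ∞) ψ₂ (Set.Ioi 0))
    (hψ₂pos : ∀ x : ℝ, 0 < x → 0 < ψ₂ x)
    (hψ₂' : CompletelyMonotoneOn (deriv ψ₂)) :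
    CompletelyMonotoneOn (ψ₁ ∘ ψ₂) := by
  have hs : IsOpen (Set.Ioi (0:ℝ)) := isOpen_Ioi
  have hψ₂'smooth : ContDiffOn ℝ (⊤ : ℕ∞) (deriv ψ₂) (Set.Ioi 0) :=
    hψ₂smooth.deriv_of_isOpen hs (by simp)
  have key : ∀ n : ℕ, ∀ f : ℝ → ℝ, ContDiffOn ℝ (⊤ : ℕ∞) f (Set.Ioi 0) →
      CompletelyMonotoneOn f → ∀ x : ℝ, 0 < x →
      0 ≤ (-1 : ℝ) ^ n * iteratedDeriv n (f ∘ ψ₂) x := by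
    intro n
    induction n using Nat.strong_induction_on with
    | _ n IH =>
      match n with
      | 0 =>
        intro f hfs hf x hx
        simpa using hf 0 (ψ₂ x) (hψ₂pos x hx)
      | (m + 1) =>
        intro f hfs hf x hx
        set h : ℝ → ℝ := fun y => -(deriv f y) with hh
        have hf' : ContDiffOn ℝ (⊤ : ℕ∞) (deriv f) (Set.Ioi 0) := hfs.deriv_of_isOpen hs (by simp)
        have hhs : ContDiffOn ℝ (⊤ : ℕ∞) h (Set.Ioi 0) := hf'.neg
        have hhCM : CompletelyMonotoneOn h := by
          intro k y hy
          have := hf (k + 1) y hy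
          rw [iteratedDeriv_succ'] at this
          have hne : iteratedDeriv k h y = -(iteratedDeriv k (deriv f) y) :=
            iteratedDeriv_neg k (deriv f) y
          rw [hne]
          calc (0:ℝ) ≤ (-1 : ℝ) ^ (k + 1) * iteratedDeriv k (deriv f) y := this
            _ = (-1 : ℝ) ^ k * -iteratedDeriv k (deriv f) y := by ring
        have hcomp : ContDiffOn ℝ (⊤ : ℕ∞) (h ∘ ψ₂) (Set.Ioi 0) := by
          refine hhs.comp hψ₂smooth ?_
          intro y hy
          exact hψ₂pos y hy
        -- derivative of composition on the open set
        have heq : ∀ y ∈ Set.Ioi (0:ℝ), deriv (f ∘ ψ₂) y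
            = -((h ∘ ψ₂) y * deriv ψ₂ y) := by
          intro y hy
          have h1 : DifferentiableAt ℝ f (ψ₂ y) :=
            (hfs.contDiffAt (hs.mem_nhds (hψ₂pos y hy))).differentiableAt (by simp)
          have h2 : DifferentiableAt ℝ ψ₂ y :=
            (hψ₂smooth.contDiffAt (hs.mem_nhds hy)).differentiableAt (by simp)
          rw [deriv_comp y h1 h2]
          simp only [hh, Function.comp_apply]
          ring
        have hrw : iteratedDeriv (m + 1) (f ∘ ψ₂) x
            = -(∑ k ∈ Finset.range (m + 1), (m.choose k : ℝ) *
                (iteratedDeriv k (h ∘ ψ₂) x * iteratedDeriv (m - k) (deriv ψ₂) x)) := by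
          rw [iteratedDeriv_succ']
          have e1 : iteratedDeriv m (deriv (f ∘ ψ₂)) x
              = iteratedDeriv m (fun y => -((h ∘ ψ₂) y * deriv ψ₂ y)) x := by
            apply Filter.EventuallyEq.iteratedDeriv_eq
            filter_upwards [hs.mem_nhds hx] with y hy using heq y hy
          rw [e1, iteratedDeriv_fun_neg m (fun y => (h ∘ ψ₂) y * deriv ψ₂ y) x,
            itd_leibniz hs m (h ∘ ψ₂) (deriv ψ₂) hcomp hψ₂'smooth x hx]
        rw [hrw]
        have : (-1 : ℝ) ^ (m + 1) *
            -(∑ k ∈ Finset.range (m + 1), (m.choose k : ℝ) *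
              (iteratedDeriv k (h ∘ ψ₂) x * iteratedDeriv (m - k) (deriv ψ₂) x))
            = ∑ k ∈ Finset.range (m + 1), (m.choose k : ℝ) *
              (((-1 : ℝ) ^ k * iteratedDeriv k (h ∘ ψ₂) x) *
               ((-1 : ℝ) ^ (m - k) * iteratedDeriv (m - k) (deriv ψ₂) x)) := by
          have e : ∀ S : ℝ, (-1 : ℝ) ^ (m + 1) * -S = (-1 : ℝ) ^ m * S := by
            intro S; rw [pow_succ]; ring
          rw [e, Finset.mul_sum]
          refine Finset.sum_congr rfl fun k hk => ?_
          rw [Finset.mem_range] at hk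
          have hpow : (-1 : ℝ) ^ k * (-1 : ℝ) ^ (m - k) = (-1 : ℝ) ^ m := by
            rw [← pow_add]
            congr 1
            omega
          rw [← hpow]
          ring
        rw [this]
        apply Finset.sum_nonneg
        intro k hk
        rw [Finset.mem_range] at hk
        have t1 : 0 ≤ (-1 : ℝ) ^ k * iteratedDeriv k (h ∘ ψ₂) x :=
          IH k (by omega) h hhs hhCM x hx
        have t2 : 0 ≤ (-1 : ℝ) ^ (m - k) * iteratedDeriv (m - k) (deriv ψ₂) x :=
          hψ₂' (m - k) x hx
        positivity
  intro n x hx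
  exact key n ψ₁ hψ₁smooth hψ₁ x hx
end
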